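/- arXiv:1809.03737 — 2 statements merged into one kernel-verified Lean document; each statement's English description precedes it below -/
import Mathlib

section
/- The Riemann–Roch function χ is submodular with respect to coordinatewise min and max: for any a, b ∈ L, χ(a ∧ b) + χ(a ∨ b) ≤ χ(a) + χ(b), where a ∧ b and a ∨ b denote the coordinatewise minimum and maximum in the E-basis. More precisely χ(a) + χ(b) - χ(a∧b) - χ(a∨b) = (a - a∧b, b - a∧b) ≥ 0, the last inequality because a - a∧b and b - a∧b are effective cycles with disjoint supports and (E_v, E_w) ≥ 0 for v ≠ w. -/
open Matrix

/-- The intersection pairing of the lattice `L ⊗ ℚ = (V → ℚ)` given by the matrix `M`. -/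
def interPair {V : Type*} [Fintype V] (M : Matrix V V ℚ) (x y : V → ℚ) : ℚ :=
  x ⬝ᵥ M.mulVec y

/-- Riemann–Roch function `χ(x) = -(x, x - Z_K)/2`. -/
def chiRR {V : Type*} [Fintype V] (M : Matrix V V ℚ) (ZK : V → ℚ) (x : V → ℚ) : ℚ :=
  -(interPair M x (x - ZK)) / 2

/-- Coercion of an integral cycle to a rational one. -/
def toQ {V : Type*} (l : V → ℤ) : V → ℚ := fun v => (l v : ℚ)

lemma ip_add_left {V : Type*} [Fintype V] (M : Matrix V V ℚ) (x y z : V → ℚ) :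
    interPair M (x + y) z = interPair M x z + interPair M y z := by
  simp [interPair, add_dotProduct]

lemma ip_add_right {V : Type*} [Fintype V] (M : Matrix V V ℚ) (x y z : V → ℚ) :
    interPair M x (y + z) = interPair M x y + interPair M x z := by
  simp [interPair, Matrix.mulVec_add, dotProduct_add]

lemma ip_sub_left {V : Type*} [Fintype V] (M : Matrix V V ℚ) (x y z : V → ℚ) :
    interPair M (x - y) z = interPair M x z - interPair M y z := by
  simp [interPair, sub_dotProduct]

lemma ip_sub_right {V : Type*} [Fintype V] (M : Matrix V V ℚ) (x y z : V → ℚ) :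
    interPair M x (y - z) = interPair M x y - interPair M x z := by
  simp [interPair, Matrix.mulVec_sub, dotProduct_sub]

lemma ip_symm {V : Type*} [Fintype V] (M : Matrix V V ℚ) (hsymm : M.IsSymm)
    (x y : V → ℚ) : interPair M x y = interPair M y x := by
  rw [interPair, interPair, Matrix.dotProduct_mulVec, ← Matrix.mulVec_transpose,
    hsymm, dotProduct_comm]

lemma ip_sum {V : Type*} [Fintype V] (M : Matrix V V ℚ) (x y : V → ℚ) :
    interPair M x y = ∑ v, ∑ w, x v * (M v w * y w) := by
  simp [interPair, dotProduct, Matrix.mulVec, Finset.mul_sum]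

/-- submodularity of `χ` with respect to coordinatewise min/max:
`χ(a) + χ(b) - χ(a∧b) - χ(a∨b) = (a - a∧b, b - a∧b) ≥ 0`, hence
`χ(a∧b) + χ(a∨b) ≤ χ(a) + χ(b)`. -/
theorem chi_submodular
    {V : Type*} [Fintype V] [DecidableEq V]
    (M : Matrix V V ℚ) (hsymm : M.IsSymm)
    (hoff : ∀ v w : V, v ≠ w → 0 ≤ M v w)
    (ZK : V → ℚ)
    (a b : V → ℤ) :
    chiRR M ZK (toQ a) + chiRR M ZK (toQ b)
      - chiRR M ZK (toQ (fun v => min (a v) (b v)))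
      - chiRR M ZK (toQ (fun v => max (a v) (b v)))
      = interPair M (toQ a - toQ (fun v => min (a v) (b v)))
          (toQ b - toQ (fun v => min (a v) (b v))) ∧
    chiRR M ZK (toQ (fun v => min (a v) (b v)))
      + chiRR M ZK (toQ (fun v => max (a v) (b v)))
      ≤ chiRR M ZK (toQ a) + chiRR M ZK (toQ b) := by
  set A := toQ a with hA
  set B := toQ b with hB
  set m := toQ (fun v => min (a v) (b v)) with hm
  have hmax : toQ (fun v => max (a v) (b v)) = A + B - m := by
    funext v
    simp only [toQ, hA, hB, hm, Pi.sub_apply, Pi.add_apply]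
    have h : (max (a v) (b v)) = a v + b v - (min (a v) (b v)) := by omega
    rw [h]; push_cast; ring
  have key : chiRR M ZK A + chiRR M ZK B - chiRR M ZK m
      - chiRR M ZK (toQ (fun v => max (a v) (b v)))
      = interPair M (A - m) (B - m) := by
    rw [hmax]
    simp only [chiRR]
    simp only [ip_sub_left, ip_sub_right, ip_add_left, ip_add_right]
    linear_combination (ip_symm M hsymm A B) / 2 + (ip_symm M hsymm A m) / 2
      + (ip_symm M hsymm B m) / 2 + ip_symm M hsymm B A + ip_symm M hsymm m B
  have hnonneg : 0 ≤ interPair M (A - m) (B - m) := by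
    rw [ip_sum]
    apply Finset.sum_nonneg
    intro v _
    apply Finset.sum_nonneg
    intro w _
    by_cases hvw : v = w
    · subst hvw
      rcases le_total (a v) (b v) with h | h
      · have : (A - m) v = 0 := by
          simp [hA, hm, toQ, min_eq_left h]
        simp [this]
      · have : (B - m) v = 0 := by
          simp [hB, hm, toQ, min_eq_right h]
        simp [this]
    · have h1 : 0 ≤ (A - m) v := by
        simp only [hA, hm, toQ, Pi.sub_apply, sub_nonneg]
        exact_mod_cast min_le_left (a v) (b v)
      have h2 : 0 ≤ (B - m) w := by
        simp only [hB, hm, toQ, Pi.sub_apply, sub_nonneg]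
        exact_mod_cast min_le_right (a w) (b w)
      exact mul_nonneg h1 (mul_nonneg (hoff v w hvw) h2)
  exact ⟨key, by linarith⟩
end

section
/- Let the symmetric bilinear form on L = ⊕_{v∈V} ℤ·E_v be negative definite, with (E_v,E_w) ∈ {0,1} for v ≠ w, and assume the graph (with edges {v,w} whenever (E_v,E_w)=1) is connected. Then for every vertex u, all E_v-coordinates of the dual base element E*_u (defined by (E*_u, E_w) = -δ_{uw}) are strictly positive. Equivalently, all entries of the inverse of the intersection matrix ((E_v,E_w))_{v,w} are strictly negative. -/
open Matrix

lemma interPair_eq {V : Type*} [Fintype V] (M : Matrix V V ℚ) (x y : V → ℚ) :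
    interPair M x y = ∑ v, ∑ w, x v * M v w * y w := by
  simp [interPair, Matrix.mulVec, dotProduct, Finset.mul_sum, mul_assoc]

/-- for a connected negative definite graph lattice,
all `E_v`-coordinates of any dual base element `E*_u` are strictly positive. -/
theorem Estar_coords_pos
    {V : Type*} [Fintype V] [DecidableEq V]
    (M : Matrix V V ℚ) (hsymm : M.IsSymm)
    (hneg : ∀ x : V → ℚ, x ≠ 0 → interPair M x x < 0)
    (hoff : ∀ v w : V, v ≠ w → M v w = 0 ∨ M v w = 1)
    (hconn : ∀ A : Set V, A.Nonempty → Aᶜ.Nonempty →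
      ∃ v ∈ A, ∃ w ∈ Aᶜ, M v w = 1)
    (Estar : V → (V → ℚ))
    (hEstar : ∀ u w : V, interPair M (Estar u) (Pi.single w 1) =
      if u = w then -1 else 0) :
    ∀ u v : V, 0 < Estar u v := by
  intro u
  set x : V → ℚ := Estar u with hx
  -- key: pairing with a basis vector in coordinates
  have key : ∀ w : V, (∑ t, x t * M t w) = if u = w then -1 else 0 := by
    intro w
    have h := hEstar u w
    rw [interPair_eq] at h
    rw [← h]
    apply Finset.sum_congr rfl
    intro t _
    rw [Finset.sum_eq_single w]
    · simp [hx]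
    · intro b _ hb
      simp [Pi.single_apply, hb]
    · simp
  have hMnn : ∀ v w : V, v ≠ w → 0 ≤ M v w := by
    intro v w h
    rcases hoff v w h with h' | h' <;> simp [h']
  -- positive and negative parts
  set xp : V → ℚ := fun v => max (x v) 0 with hxp
  set xm : V → ℚ := fun v => max (-(x v)) 0 with hxm
  have hsub : ∀ v, xm v = xp v - x v := by
    intro v; simp [hxp, hxm, max_sub_sub_right, sub_eq_add_neg]
    rcases le_total (x v) 0 with h | h
    · rw [max_eq_left (by linarith), max_eq_right h]; ring
    · rw [max_eq_right (by linarith), max_eq_left h]; ring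
  have hxm_nn : ∀ v, 0 ≤ xm v := fun v => le_max_right _ _
  have hxp_nn : ∀ v, 0 ≤ xp v := fun v => le_max_right _ _
  have hprod : ∀ v, xp v * xm v = 0 := by
    intro v
    rcases le_total (x v) 0 with h | h
    · simp [hxp, max_eq_right h]
    · simp [hxm, max_eq_right (by linarith : -(x v) ≤ 0)]
  -- (x, xm) = -xm u ≤ 0
  have hxxm : interPair M x xm = -(xm u) := by
    rw [interPair_eq]
    rw [Finset.sum_comm]
    have : ∀ w : V, (∑ v, x v * M v w * xm w) = (if u = w then -1 else 0) * xm w := by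
      intro w
      rw [← Finset.sum_mul, key w]
    rw [Finset.sum_congr rfl fun w _ => this w]
    simp [Finset.sum_ite_eq]
  -- (xp, xm) ≥ 0
  have hxpxm : 0 ≤ interPair M xp xm := by
    rw [interPair_eq]
    apply Finset.sum_nonneg
    intro v _
    apply Finset.sum_nonneg
    intro w _
    rcases eq_or_ne v w with rfl | h
    · have h0 : xp v * M v v * xm v = 0 := by
        rw [mul_right_comm, hprod v, zero_mul]
      exact le_of_eq h0.symm
    · have h1 := hMnn v w h
      have := hxp_nn v
      have := hxm_nn w
      positivity
  -- (xm, xm) ≥ 0, hence xm = 0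
  have hxmxm : 0 ≤ interPair M xm xm := by
    have : interPair M xm xm = interPair M xp xm - interPair M x xm := by
      simp only [interPair_eq]
      rw [← Finset.sum_sub_distrib]
      apply Finset.sum_congr rfl
      intro v _
      rw [← Finset.sum_sub_distrib]
      apply Finset.sum_congr rfl
      intro w _
      rw [hsub v]; ring
    rw [this, hxxm]
    have := hxm_nn u
    linarith
  have hxm0 : xm = 0 := by
    by_contra h
    exact absurd hxmxm (not_le.mpr (hneg xm h))
  have hx_nn : ∀ v, 0 ≤ x v := by
    intro v
    have : xm v = 0 := congrFun hxm0 v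
    simp only [hxm] at this
    by_contra h
    push_neg at h
    rw [max_eq_left (by linarith)] at this
    linarith
  -- x ≠ 0
  have hx_ne : x ≠ 0 := by
    intro h
    have := key u
    simp [h] at this
  -- A = support of x
  set A : Set V := {v | 0 < x v} with hA
  have hA_ne : A.Nonempty := by
    by_contra h
    rw [Set.not_nonempty_iff_eq_empty] at h
    apply hx_ne
    funext v
    have : v ∉ A := by simp [h]
    have h2 := hx_nn v
    simp only [hA, Set.mem_setOf_eq, not_lt] at this
    exact le_antisymm this h2
  by_contra hcon
  push_neg at hcon
  obtain ⟨v0, hv0⟩ := hcon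
  have hAc_ne : Aᶜ.Nonempty := by
    refine ⟨v0, ?_⟩
    simp only [hA, Set.mem_compl_iff, Set.mem_setOf_eq, not_lt]
    exact hv0
  obtain ⟨v, hvA, w, hwAc, hMvw⟩ := hconn A hA_ne hAc_ne
  have hxw : x w = 0 := by
    have : ¬ 0 < x w := hwAc
    exact le_antisymm (not_lt.mp this) (hx_nn w)
  have hvw : v ≠ w := by
    intro h; rw [h] at hvA; exact absurd hvA (by simp [hA, hxw])
  -- sum ∑ t, x t * M t w is positive
  have hpos : 0 < ∑ t, x t * M t w := by
    have hterm : ∀ t ∈ Finset.univ, 0 ≤ x t * M t w := by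
      intro t _
      rcases eq_or_ne t w with rfl | h
      · rw [hxw]; ring_nf; simp
      · exact mul_nonneg (hx_nn t) (hMnn t w h)
    have hv : x v * M v w ≤ ∑ t, x t * M t w :=
      Finset.single_le_sum hterm (Finset.mem_univ v)
    have : 0 < x v * M v w := by
      rw [hMvw, mul_one]; exact hvA
    linarith
  have := key w
  rcases eq_or_ne u w with rfl | h
  · simp at this; linarith
  · rw [if_neg h] at this; linarith
end
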